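/- arXiv:2501.03780 — 4 statements merged into one kernel-verified Lean document; each statement's English description precedes it below -/
import Mathlib

section
/- Let Φ : ℝ^K → ℝ^K be a linear operator with adjoint Φ*, D : ℝ^K → ℝ ∪ {∞} a proper lower semicontinuous convex function, C ⊆ ℝ^K a nonempty closed convex set with indicator function ι_C, and A : ℝ^K → 2^{ℝ^K} a maximally monotone operator whose resolvent J = (Id + A)⁻¹ is single-valued and defined on all of ℝ^K. Let γ₁ > 0 and γ₂ > 0 satisfy 1/γ₁ − γ₂(‖Φ‖²_op + 1) > 0, and let (ρ_n) satisfy ρ_n ∈ (0, 2) for all n and Σ_n ρ_n(2 − ρ_n) = ∞. Assume there exists (x̂, ŷ¹, ŷ²) ∈ ℝ^K × ℝ^K × ℝ^K with 0 ∈ γ₁⁻¹A(x̂) + Φ*ŷ¹ + ŷ², 0 ∈ −Φx̂ + ∂D*(ŷ¹), and 0 ∈ −x̂ + ∂ι_C*(ŷ²). Then for any initialization, the sequence (x_n, y¹_n, y²_n) generated by x̃_{n+1} = J(x_n − γ₁(Φ*y¹_n + y²_n)), ỹ¹_{n+1} = prox_{γ₂D*}(y¹_n + γ₂Φ(2x̃_{n+1}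 − x_n)), ỹ²_{n+1} = prox_{γ₂ι_C*}(y²_n + γ₂(2x̃_{n+1} − x_n)), x_{n+1} = ρ_n x̃_{n+1} + (1 − ρ_n)x_n, y¹_{n+1} = ρ_n ỹ¹_{n+1} + (1 − ρ_n)y¹_n, y²_{n+1} = ρ_n ỹ²_{n+1} + (1 − ρ_n)y²_n converges to a triple (x*, y¹*, y²*) satisfying the three inclusions above. -/
/-!
Write `z = (x, y¹, y²)` and `T` for the unrelaxed primal-dual step, so that the iteration is
`z ↦ z - ρ (z - T z)`. Adding the monotonicity inequalities of `A`, `∂D*` and `∂ι_C*` between a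
step and a solution `z*` gives `⟪T z - z*, P (z - T z)⟫ ≥ 0` for the preconditioner
`P = [[γ₁⁻¹, -Φ*, -1], [-Φ, γ₂⁻¹, 0], [-1, 0, γ₂⁻¹]]`, and the step-size condition makes `P`
positive definite (Young's inequality). Hence `‖z - z*‖²_P` decreases by at least
`ρ (2 - ρ) ‖z - T z‖²_P` at each step. As `∑ ρ (2 - ρ) = ∞`, the residual `z - T z` tends to zero
along a subsequence, a further subsequence converges (finite dimension), and its limit is a
solution because the graphs of a maximally monotone operator and of the subdifferential of a
lower semicontinuous function are closed. Fejér monotonicity with respect to this limit then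
forces the whole sequence to converge to it.
-/

open Filter Topology RealInnerProductSpace

noncomputable section

/-- A set-valued operator on a real inner product space is monotone. -/
def MonotoneOp {H : Type*} [NormedAddCommGroup H] [InnerProductSpace ℝ H]
    (A : H → Set H) : Prop :=
  ∀ ⦃x x' y y' : H⦄, y ∈ A x → y' ∈ A x' → (0 : ℝ) ≤ ⟪x - x', y - y'⟫

/-- A set-valued operator is maximally monotone if it is monotone and its graph is not
properly contained in the graph of any monotone operator. -/
def MaximallyMonotone {H : Type*} [NormedAddCommGroup H] [InnerProductSpace ℝ H]
    (A : H → Set H) : Prop :=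
  MonotoneOp A ∧ ∀ B : H → Set H, MonotoneOp B → (∀ x, A x ⊆ B x) → ∀ x, B x ⊆ A x

/-- Weak convergence of a sequence in a real inner product space. -/
def WeakLim {H : Type*} [NormedAddCommGroup H] [InnerProductSpace ℝ H]
    (z : ℕ → H) (l : H) : Prop :=
  ∀ w : H, Tendsto (fun n => ⟪z n, w⟫) atTop (nhds ⟪l, w⟫)

/-- Convex conjugate of an extended-real-valued function. -/
def ConjE {H : Type*} [NormedAddCommGroup H] [InnerProductSpace ℝ H]
    (F : H → EReal) (y : H) : EReal :=
  ⨆ x : H, ((⟪x, y⟫ : ℝ) : EReal) - F x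

/-- Subdifferential of an extended-real-valued function. -/
def SubdiffE {H : Type*} [NormedAddCommGroup H] [InnerProductSpace ℝ H]
    (F : H → EReal) (x : H) : Set H :=
  {u | ∀ y, F x + ((⟪u, y - x⟫ : ℝ) : EReal) ≤ F y}

/-- Properness of an extended-real-valued function. -/
def ProperE {H : Type*} (F : H → EReal) : Prop :=
  (∃ x, F x ≠ ⊤) ∧ ∀ x, F x ≠ ⊥

/-- Convexity of an extended-real-valued function. -/
def ConvexE {H : Type*} [AddCommGroup H] [Module ℝ H] (F : H → EReal) : Prop :=
  ∀ x y : H, ∀ a b : ℝ, 0 ≤ a → 0 ≤ b → a + b = 1 →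
    F (a • x + b • y) ≤ (a : EReal) * F x + (b : EReal) * F y

/-- `p` is the (unique) minimizer defining `prox_{γ F}(x)`. -/
def IsProxPt {H : Type*} [NormedAddCommGroup H] [InnerProductSpace ℝ H]
    (γ : ℝ) (F : H → EReal) (x p : H) : Prop :=
  (∀ y, F p + ((1 / (2 * γ) * ‖p - x‖ ^ 2 : ℝ) : EReal)
      ≤ F y + ((1 / (2 * γ) * ‖y - x‖ ^ 2 : ℝ) : EReal)) ∧
  ∀ q, (∀ y, F q + ((1 / (2 * γ) * ‖q - x‖ ^ 2 : ℝ) : EReal)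
      ≤ F y + ((1 / (2 * γ) * ‖y - x‖ ^ 2 : ℝ) : EReal)) → q = p

open Classical in
/-- Indicator function of a set, valued in `EReal`: `0` on `C` and `⊤` elsewhere. -/
def indicatorE {H : Type*} (C : Set H) (x : H) : EReal :=
  if x ∈ C then (0 : EReal) else ⊤


lemma properE_indicatorE {H : Type*} {C : Set H} (hC : C.Nonempty) : ProperE (indicatorE C) := by
  refine ⟨⟨hC.some, by simp [indicatorE, hC.some_mem]⟩, fun x => ?_⟩
  by_cases hx : x ∈ C <;> simp [indicatorE, hx]

section ConvexAnalysis

variable {H : Type*} [NormedAddCommGroup H] [InnerProductSpace ℝ H]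

lemma le_conjE (G : H → EReal) (x y : H) : ((⟪x, y⟫ : ℝ) : EReal) - G x ≤ ConjE G y :=
  le_iSup (fun x : H => ((⟪x, y⟫ : ℝ) : EReal) - G x) x

lemma conjE_ne_bot {G : H → EReal} (hG : ProperE G) (y : H) : ConjE G y ≠ ⊥ := by
  obtain ⟨⟨x, hx⟩, hbot⟩ := hG
  refine ne_bot_of_le_ne_bot ?_ (le_conjE G x y)
  rw [← EReal.coe_toReal hx (hbot x), ← EReal.coe_sub]
  exact EReal.coe_ne_bot _

lemma convexE_iSup {ι : Type*} {F : ι → H → EReal} (hF : ∀ i, ConvexE (F i)) :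
    ConvexE fun y => ⨆ i, F i y := by
  intro x y a b ha hb hab
  refine iSup_le fun i => (hF i x y a b ha hb hab).trans (add_le_add ?_ ?_)
  · exact mul_le_mul_of_nonneg_left (le_iSup (F · x) i) (by exact_mod_cast ha)
  · exact mul_le_mul_of_nonneg_left (le_iSup (F · y) i) (by exact_mod_cast hb)

lemma convexE_conjE {G : H → EReal} (hbot : ∀ x, G x ≠ ⊥) : ConvexE (ConjE G) := by
  refine convexE_iSup fun x y y' a b _ _ hab => ?_
  rcases eq_or_ne (G x) ⊤ with htop | htop
  · simp [htop]
  rw [← EReal.coe_toReal htop (hbot x)]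
  norm_cast
  rw [inner_add_right, inner_smul_right, inner_smul_right]
  linear_combination (G x).toReal * hab

lemma lowerSemicontinuous_conjE (G : H → EReal) : LowerSemicontinuous (ConjE G) := by
  refine lowerSemicontinuous_iSup fun x => ?_
  rcases eq_or_ne (G x) ⊤ with htop | htop
  · simpa [htop] using lowerSemicontinuous_const
  rcases eq_or_ne (G x) ⊥ with hbot | hbot
  · simpa [hbot] using lowerSemicontinuous_const
  rw [← EReal.coe_toReal htop hbot]
  simp_rw [← EReal.coe_sub]
  exact (continuous_coe_real_ereal.comp
    ((continuous_const.inner continuous_id).sub continuous_const)).lowerSemicontinuous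

lemma ne_top_of_mem_subdiffE {F : H → EReal} {u p y : H} (hu : u ∈ SubdiffE F p)
    (hy : F y ≠ ⊤) : F p ≠ ⊤ := by
  intro hp
  have := hu y
  rw [hp, EReal.top_add_coe, top_le_iff] at this
  exact hy this

lemma monotoneOp_subdiffE {F : H → EReal} (hF : ProperE F) : MonotoneOp (SubdiffE F) := by
  intro a b u v hu hv
  obtain ⟨⟨y, hy⟩, hbot⟩ := hF
  have ha := ne_top_of_mem_subdiffE hu hy
  have hb := ne_top_of_mem_subdiffE hv hy
  have hab := hu b
  have hba := hv a
  rw [← EReal.coe_toReal ha (hbot a), ← EReal.coe_toReal hb (hbot b)] at hab hba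
  norm_cast at hab hba
  have : ⟪a - b, u - v⟫ = -(⟪u, b - a⟫ + ⟪v, a - b⟫) := by
    rw [← neg_sub a b, inner_neg_right, real_inner_comm (a - b) u, real_inner_comm (a - b) v,
      inner_sub_right]
    ring
  linarith

end ConvexAnalysis

lemma le_of_forall_le_add_mul {a b c : ℝ} (h : ∀ t ∈ Set.Ioo (0 : ℝ) 1, a ≤ b + t * c) :
    a ≤ b := by
  have hlim : Tendsto (fun t => b + t * c) (𝓝[>] 0) (𝓝 b) := by
    have : Tendsto (fun t : ℝ => b + t * c) (𝓝 0) (𝓝 (b + 0 * c)) :=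
      (continuous_const.add (continuous_id.mul continuous_const)).tendsto 0
    simpa using this.mono_left nhdsWithin_le_nhds
  exact ge_of_tendsto hlim (eventually_of_mem (Ioo_mem_nhdsGT one_pos) h)

section Prox

variable {H : Type*} [NormedAddCommGroup H] [InnerProductSpace ℝ H] {γ : ℝ} {F : H → EReal}
  {x p : H}

lemma IsProxPt.exists_ne_top [Nontrivial H] (h : IsProxPt γ F x p) : ∃ y, F y ≠ ⊤ := by
  by_contra! hF
  obtain ⟨q, hq⟩ := exists_ne p
  exact hq (h.2 q fun y => by simp only [hF, EReal.top_add_coe, le_refl])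

lemma IsProxPt.ne_top (hF : ProperE F) (h : IsProxPt γ F x p) : F p ≠ ⊤ := by
  obtain ⟨⟨y, hy⟩, hbot⟩ := hF
  intro hp
  have := h.1 y
  rw [hp, EReal.top_add_coe, top_le_iff, ← EReal.coe_toReal hy (hbot y), ← EReal.coe_add] at this
  exact EReal.coe_ne_top _ this

lemma IsProxPt.smul_sub_mem_subdiffE (hF : ProperE F) (hconv : ConvexE F)
    (h : IsProxPt γ F x p) : γ⁻¹ • (x - p) ∈ SubdiffE F p := by
  intro y
  rcases eq_or_ne (F y) ⊤ with hy | hy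
  · simp [hy]
  obtain ⟨r, hr⟩ : ∃ r : ℝ, F p = r := ⟨_, (EReal.coe_toReal (h.ne_top hF) (hF.2 p)).symm⟩
  obtain ⟨s, hs⟩ : ∃ s : ℝ, F y = s := ⟨_, (EReal.coe_toReal hy (hF.2 y)).symm⟩
  rw [hr, hs, ← EReal.coe_add, EReal.coe_le_coe_iff, real_inner_smul_left]
  -- compare `p` with the point `(1 - t) • p + t • y` of the segment `[p, y]` and let `t → 0`
  refine le_of_forall_le_add_mul (c := (2 * γ)⁻¹ * ‖y - p‖ ^ 2) fun t ⟨ht₀, ht₁⟩ => ?_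
  have hmin := h.1 ((1 - t) • p + t • y)
  have hcvx := hconv p y (1 - t) t (by linarith) ht₀.le (by ring)
  rw [hr, hs] at hcvx
  rw [hr] at hmin
  have hle := hmin.trans (add_le_add_left hcvx _)
  norm_cast at hle
  have hexp : ‖(1 - t) • p + t • y - x‖ ^ 2
      = ‖p - x‖ ^ 2 + 2 * t * ⟪p - x, y - p⟫ + t ^ 2 * ‖y - p‖ ^ 2 := by
    rw [show (1 - t) • p + t • y - x = (p - x) + t • (y - p) by module, norm_add_sq_real,
      norm_smul, inner_smul_right, Real.norm_eq_abs, abs_of_pos ht₀]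
    ring
  have hneg : ⟪x - p, y - p⟫ = -⟪p - x, y - p⟫ := by rw [← inner_neg_left, neg_sub]
  rw [hexp] at hle
  rw [hneg]
  refine le_of_mul_le_mul_left ?_ ht₀
  linear_combination hle

end Prox

section GraphClosedness

variable {H : Type*} [NormedAddCommGroup H] [InnerProductSpace ℝ H]

lemma mem_subdiffE_of_tendsto {F : H → EReal} (hF : LowerSemicontinuous F)
    {pk uk : ℕ → H} {p u : H} (hmem : ∀ k, uk k ∈ SubdiffE F (pk k))
    (hp : Tendsto pk atTop (𝓝 p)) (hu : Tendsto uk atTop (𝓝 u)) : u ∈ SubdiffE F p := by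
  intro y
  have hsub : ∀ {a : EReal} {c : ℝ}, a + c ≤ F y ↔ a ≤ F y - c := fun {_ c} =>
    (EReal.le_sub_iff_add_le (.inl (EReal.coe_ne_bot c)) (.inl (EReal.coe_ne_top c))).symm
  rcases eq_or_ne (F y) ⊤ with hy | hy
  · simp [hy]
  rcases eq_or_ne (F y) ⊥ with hy' | hy'
  · have hpk : ∀ k, F (pk k) = ⊥ := fun k => by simpa [hy'] using hmem k y
    have hbot : F p = ⊥ := by
      by_contra h
      obtain ⟨k, hk⟩ := (hp.eventually (hF p ⊥ (bot_lt_iff_ne_bot.2 h))).exists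
      simp [hpk] at hk
    simp [hbot]
  lift F y to ℝ using ⟨hy, hy'⟩ with s hs
  rw [hsub, ← EReal.coe_sub]
  have hlim : Tendsto (fun k => ((s - ⟪uk k, y - pk k⟫ : ℝ) : EReal)) atTop
      (𝓝 ((s - ⟪u, y - p⟫ : ℝ) : EReal)) :=
    (continuous_coe_real_ereal.tendsto _).comp
      (tendsto_const_nhds.sub (hu.inner (tendsto_const_nhds.sub hp)))
  refine le_of_forall_lt_imp_le_of_dense fun b hb => ge_of_tendsto hlim ?_
  filter_upwards [hp.eventually (hF p b hb)] with k hk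
  exact hk.le.trans (by rw [EReal.coe_sub, ← hsub, hs]; exact hmem k y)

lemma MaximallyMonotone.mem_of_forall_inner_nonneg {A : H → Set H} (hA : MaximallyMonotone A)
    {p a : H} (h : ∀ x y, y ∈ A x → 0 ≤ ⟪p - x, a - y⟫) : a ∈ A p := by
  refine hA.2 (fun x => A x ∪ {y | x = p ∧ y = a}) ?_ (fun _ => Set.subset_union_left) p
    (Or.inr ⟨rfl, rfl⟩)
  rintro x x' y y' (hy | ⟨rfl, rfl⟩) (hy' | ⟨rfl, rfl⟩)
  · exact hA.1 hy hy'
  · rw [← inner_neg_neg, neg_sub, neg_sub]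
    exact h x y hy
  · exact h x' y' hy'
  · simp

lemma MaximallyMonotone.mem_of_tendsto {A : H → Set H} (hA : MaximallyMonotone A)
    {pk ak : ℕ → H} {p a : H} (hmem : ∀ k, ak k ∈ A (pk k))
    (hp : Tendsto pk atTop (𝓝 p)) (ha : Tendsto ak atTop (𝓝 a)) : a ∈ A p :=
  hA.mem_of_forall_inner_nonneg fun _ _ hy =>
    ge_of_tendsto ((hp.sub tendsto_const_nhds).inner (ha.sub tendsto_const_nhds))
      (Eventually.of_forall fun k => hA.1 (hmem k) hy)

end GraphClosedness

lemma exists_subseq_tendsto_zero_of_sum_mul_le {c s : ℕ → ℝ} (hc : ∀ n, 0 ≤ c n)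
    (hs : ∀ n, 0 ≤ s n) {M : ℝ} (hM : ∀ N, ∑ n ∈ Finset.range N, c n * s n ≤ M)
    (hdiv : Tendsto (fun N => ∑ n ∈ Finset.range N, c n) atTop atTop) :
    ∃ φ : ℕ → ℕ, StrictMono φ ∧ Tendsto (s ∘ φ) atTop (𝓝 0) := by
  have hcs : Summable fun n => c n * s n :=
    summable_of_sum_range_le (fun n => mul_nonneg (hc n) (hs n)) hM
  have hfreq : ∀ ε > 0, ∃ᶠ n in atTop, s n < ε := by
    intro ε hε
    rw [frequently_atTop]
    by_contra! h
    obtain ⟨m, hm⟩ := h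
    have hsum : Summable c := by
      refine (summable_nat_add_iff m).1 <|
        (((summable_nat_add_iff m).2 hcs).div_const ε).of_nonneg_of_le (fun n => hc _) fun n => ?_
      rw [le_div_iff₀ hε]
      exact mul_le_mul_of_nonneg_left (hm _ (Nat.le_add_left m n)) (hc _)
    exact not_tendsto_atTop_of_tendsto_nhds hsum.hasSum.tendsto_sum_nat hdiv
  obtain ⟨φ, hφ, hsφ⟩ := extraction_forall_of_frequently fun j : ℕ =>
    hfreq (1 / (j + 1)) Nat.one_div_pos_of_nat
  exact ⟨φ, hφ, squeeze_zero (fun k => hs (φ k)) (fun k => (hsφ k).le)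
    tendsto_one_div_add_atTop_nhds_zero_nat⟩

section Fejer

variable {V : Type*} [NormedAddCommGroup V] [NormedSpace ℝ V] (B : V →L[ℝ] V →L[ℝ] ℝ)

lemma apply_sub_smul_le_of_nonneg (hB : ∀ u v, B u v = B v u) {p d : V} {ρ : ℝ} (hρ : 0 ≤ ρ)
    (h : 0 ≤ B (p - d) d) : B (p - ρ • d) (p - ρ • d) ≤ B p p - ρ * (2 - ρ) * B d d := by
  simp only [map_sub, map_smul, sub_apply, smul_apply, smul_eq_mul] at h ⊢
  rw [hB d p]
  nlinarith

variable {B}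

lemma IsCoercive.apply_self_nonneg (hB : IsCoercive B) (v : V) : 0 ≤ B v v := by
  obtain ⟨C, hC, h⟩ := hB
  exact (by positivity : 0 ≤ C * ‖v‖ * ‖v‖).trans (h v)

lemma IsCoercive.isBounded_setOf_apply_le (hB : IsCoercive B) (M : ℝ) :
    Bornology.IsBounded {v | B v v ≤ M} := by
  obtain ⟨C, hC, h⟩ := hB
  refine isBounded_iff_forall_norm_le.2 ⟨√(M / C), fun v hv => ?_⟩
  rw [← Real.sqrt_mul_self (norm_nonneg v)]
  exact Real.sqrt_le_sqrt ((le_div_iff₀' hC).2 (by linarith [h v, hv.out]))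

lemma IsCoercive.tendsto_zero {ι : Type*} {l : Filter ι} {u : ι → V} (hB : IsCoercive B)
    (h : Tendsto (fun i => B (u i) (u i)) l (𝓝 0)) : Tendsto u l (𝓝 0) := by
  obtain ⟨C, hC, hle⟩ := hB
  have hsq : Tendsto (fun i => ‖u i‖ * ‖u i‖) l (𝓝 0) :=
    squeeze_zero (g := fun i => B (u i) (u i) / C) (fun _ => by positivity)
      (fun i => (le_div_iff₀' hC).2 (by rw [← mul_assoc]; exact hle (u i)))
      (by simpa using h.div_const C)
  have := (Real.continuous_sqrt.tendsto 0).comp hsq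
  simp only [Function.comp_def, Real.sqrt_mul_self_eq_abs, abs_norm, Real.sqrt_zero] at this
  exact tendsto_zero_iff_norm_tendsto_zero.2 this

theorem exists_tendsto_of_fejer [ProperSpace V] (hB : IsCoercive B) {S : Set V}
    (hS : S.Nonempty) {z w : ℕ → V} {c : ℕ → ℝ} (hc : ∀ n, 0 ≤ c n)
    (hcsum : Tendsto (fun N => ∑ n ∈ Finset.range N, c n) atTop atTop)
    (hfejer : ∀ s ∈ S, ∀ n, B (z (n + 1) - s) (z (n + 1) - s)
      ≤ B (z n - s) (z n - s) - c n * B (z n - w n) (z n - w n))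
    (hcluster : ∀ (φ : ℕ → ℕ) (s : V), Tendsto (z ∘ φ) atTop (𝓝 s) →
      Tendsto (w ∘ φ) atTop (𝓝 s) → s ∈ S) :
    ∃ s ∈ S, Tendsto z atTop (𝓝 s) := by
  obtain ⟨s₀, hs₀⟩ := hS
  have hanti : ∀ s ∈ S, Antitone fun n => B (z n - s) (z n - s) := fun s hs =>
    antitone_nat_of_succ_le fun n => by
      nlinarith [hfejer s hs n, mul_nonneg (hc n) (hB.apply_self_nonneg (z n - w n))]
  have hsum (N : ℕ) : ∑ n ∈ Finset.range N, c n * B (z n - w n) (z n - w n)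
      ≤ B (z 0 - s₀) (z 0 - s₀) := by
    calc ∑ n ∈ Finset.range N, c n * B (z n - w n) (z n - w n)
        ≤ ∑ n ∈ Finset.range N, (B (z n - s₀) (z n - s₀) - B (z (n + 1) - s₀) (z (n + 1) - s₀)) :=
          Finset.sum_le_sum fun n _ => by linarith [hfejer s₀ hs₀ n]
      _ = B (z 0 - s₀) (z 0 - s₀) - B (z N - s₀) (z N - s₀) := Finset.sum_range_sub' _ _
      _ ≤ B (z 0 - s₀) (z 0 - s₀) := by linarith [hB.apply_self_nonneg (z N - s₀)]
  obtain ⟨ψ, hψ, hres⟩ := exists_subseq_tendsto_zero_of_sum_mul_le hc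
    (fun n => hB.apply_self_nonneg _) hsum hcsum
  obtain ⟨v, -, φ, hφ, hv⟩ := tendsto_subseq_of_bounded
    (hB.isBounded_setOf_apply_le (B (z 0 - s₀) (z 0 - s₀)))
    (fun k => hanti s₀ hs₀ (Nat.zero_le (ψ k)))
  have hz : Tendsto (z ∘ ψ ∘ φ) atTop (𝓝 (v + s₀)) := by
    simpa [Function.comp_def] using hv.add_const s₀
  have hw : Tendsto (w ∘ ψ ∘ φ) atTop (𝓝 (v + s₀)) := by
    have := hz.sub (hB.tendsto_zero (hres.comp hφ.tendsto_atTop))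
    simpa [Function.comp_def] using this
  have hs := hcluster _ _ hz hw
  refine ⟨v + s₀, hs, ?_⟩
  have hdist : Tendsto (fun n => B (z n - (v + s₀)) (z n - (v + s₀))) atTop (𝓝 0) := by
    rw [tendsto_iff_tendsto_subseq_of_antitone (hanti _ hs) (hψ.comp hφ).tendsto_atTop]
    have hz' : Tendsto (fun k => z (ψ (φ k)) - (v + s₀)) atTop (𝓝 0) := by
      simpa using hz.sub_const (v + s₀)
    have := (B.continuous₂.tendsto (0, 0)).comp (hz'.prodMk_nhds hz')
    rw [Function.uncurry_apply_pair, map_zero] at this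
    exact this
  simpa using (hB.tendsto_zero hdist).add_const (v + s₀)

theorem exists_tendsto_of_relaxed_iteration [ProperSpace V] (hBsymm : ∀ u v, B u v = B v u)
    (hB : IsCoercive B) {S : Set V} (hS : S.Nonempty) {z w : ℕ → V} {ρ : ℕ → ℝ}
    (hρ : ∀ n, ρ n ∈ Set.Icc (0 : ℝ) 2)
    (hρsum : Tendsto (fun N => ∑ n ∈ Finset.range N, ρ n * (2 - ρ n)) atTop atTop)
    (hz : ∀ n, z (n + 1) = z n - ρ n • (z n - w n))
    (hfirm : ∀ s ∈ S, ∀ n, 0 ≤ B (w n - s) (z n - w n))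
    (hcluster : ∀ (φ : ℕ → ℕ) (s : V), Tendsto (z ∘ φ) atTop (𝓝 s) →
      Tendsto (w ∘ φ) atTop (𝓝 s) → s ∈ S) :
    ∃ s ∈ S, Tendsto z atTop (𝓝 s) := by
  refine exists_tendsto_of_fejer hB hS (fun n => mul_nonneg (hρ n).1 (sub_nonneg.2 (hρ n).2))
    hρsum (fun s hs n => ?_) hcluster
  rw [hz n, sub_right_comm]
  exact apply_sub_smul_le_of_nonneg B hBsymm (hρ n).1 (by simpa using hfirm s hs n)

end Fejer

lemma two_mul_le_mul_sq_add_inv_mul_sq {a b s : ℝ} (hs : 0 < s) :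
    2 * a * b ≤ s * a ^ 2 + s⁻¹ * b ^ 2 := by
  have : s * a ^ 2 + s⁻¹ * b ^ 2 - 2 * a * b = (s * a - b) ^ 2 / s := by
    field_simp
    ring
  nlinarith [div_nonneg (sq_nonneg (s * a - b)) hs.le]

lemma norm_prod_prod_sq_le {E : Type*} [SeminormedAddCommGroup E] (u : E × E × E) :
    ‖u‖ ^ 2 ≤ ‖u.1‖ ^ 2 + ‖u.2.1‖ ^ 2 + ‖u.2.2‖ ^ 2 := by
  have h₁ := norm_nonneg u.1
  have h₂ := norm_nonneg u.2.1
  have h₃ := norm_nonneg u.2.2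
  rw [Prod.norm_def, Prod.norm_def]
  rcases max_cases ‖u.2.1‖ ‖u.2.2‖ with ⟨h, -⟩ | ⟨h, -⟩ <;> rw [h] <;>
    rcases max_cases ‖u.1‖ _ with ⟨h', -⟩ | ⟨h', -⟩ <;> rw [h'] <;> nlinarith

section PrimalDual

open scoped InnerProduct

variable {H : Type*} [NormedAddCommGroup H] [InnerProductSpace ℝ H]
  (Φ : H →L[ℝ] H) (γ₁ γ₂ : ℝ)

def pdsForm : (H × H × H) →L[ℝ] (H × H × H) →L[ℝ] ℝ :=
  let π₁ := ContinuousLinearMap.fst ℝ H (H × H)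
  let π₂ := (ContinuousLinearMap.fst ℝ H H).comp (ContinuousLinearMap.snd ℝ H (H × H))
  let π₃ := (ContinuousLinearMap.snd ℝ H H).comp (ContinuousLinearMap.snd ℝ H (H × H))
  let ι := innerSL ℝ (E := H)
  γ₁⁻¹ • ι.bilinearComp π₁ π₁ + γ₂⁻¹ • ι.bilinearComp π₂ π₂ + γ₂⁻¹ • ι.bilinearComp π₃ π₃
    - ι.bilinearComp (Φ.comp π₁) π₂ - ι.bilinearComp π₂ (Φ.comp π₁)
    - ι.bilinearComp π₁ π₃ - ι.bilinearComp π₃ π₁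

@[simp]
lemma pdsForm_apply (u v : H × H × H) :
    pdsForm Φ γ₁ γ₂ u v = γ₁⁻¹ * ⟪u.1, v.1⟫ + γ₂⁻¹ * ⟪u.2.1, v.2.1⟫ + γ₂⁻¹ * ⟪u.2.2, v.2.2⟫
      - ⟪Φ u.1, v.2.1⟫ - ⟪u.2.1, Φ v.1⟫ - ⟪u.1, v.2.2⟫ - ⟪u.2.2, v.1⟫ := by
  simp [pdsForm]

lemma pdsForm_comm (u v : H × H × H) : pdsForm Φ γ₁ γ₂ u v = pdsForm Φ γ₁ γ₂ v u := by
  simp only [pdsForm_apply, real_inner_comm]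
  ring

lemma le_pdsForm_apply_self {s : ℝ} (hs : 0 < s) (u : H × H × H) :
    (γ₁⁻¹ - s * (‖Φ‖ ^ 2 + 1)) * ‖u.1‖ ^ 2 + (γ₂⁻¹ - s⁻¹) * (‖u.2.1‖ ^ 2 + ‖u.2.2‖ ^ 2)
      ≤ pdsForm Φ γ₁ γ₂ u u := by
  obtain ⟨a, b, c⟩ := u
  simp only [pdsForm_apply, real_inner_self_eq_norm_sq, real_inner_comm (Φ a) b,
    real_inner_comm a c]
  have hΦ : ⟪Φ a, b⟫ ≤ ‖Φ‖ * ‖a‖ * ‖b‖ := (real_inner_le_norm _ _).trans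
    (mul_le_mul_of_nonneg_right (Φ.le_opNorm a) (norm_nonneg b))
  have hΦ' := two_mul_le_mul_sq_add_inv_mul_sq (a := ‖Φ‖ * ‖a‖) (b := ‖b‖) hs
  have hc := two_mul_le_mul_sq_add_inv_mul_sq (a := ‖a‖) (b := ‖c‖) hs
  rw [mul_pow] at hΦ'
  nlinarith [real_inner_le_norm a c]

lemma isCoercive_pdsForm (hγ₂ : 0 < γ₂) (h : γ₂ * (‖Φ‖ ^ 2 + 1) < γ₁⁻¹) :
    IsCoercive (pdsForm Φ γ₁ γ₂) := by
  set M := ‖Φ‖ ^ 2 + 1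
  have hM : 0 < M := by positivity
  -- any weight `s` for Young's inequality strictly between `γ₂` and `(γ₁ M)⁻¹` works
  set s := (γ₂ + γ₁⁻¹ / M) / 2 with hs_def
  have hγ₂s : γ₂ < s := by
    have : γ₂ < γ₁⁻¹ / M := (lt_div_iff₀ hM).2 h
    rw [hs_def]
    linarith
  have hsM : s * M < γ₁⁻¹ := by
    have : γ₁⁻¹ / M * M = γ₁⁻¹ := div_mul_cancel₀ _ hM.ne'
    rw [hs_def]
    nlinarith
  have hs : 0 < s := hγ₂.trans hγ₂s
  have hinv : s⁻¹ < γ₂⁻¹ := inv_strictAnti₀ hγ₂ hγ₂s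
  set κ := min (γ₁⁻¹ - s * M) (γ₂⁻¹ - s⁻¹)
  have hκ : 0 < κ := lt_min (by linarith) (by linarith)
  have hκ₁ : κ ≤ γ₁⁻¹ - s * M := min_le_left _ _
  have hκ₂ : κ ≤ γ₂⁻¹ - s⁻¹ := min_le_right _ _
  refine ⟨κ, hκ, fun u => ?_⟩
  calc κ * ‖u‖ * ‖u‖ ≤ κ * (‖u.1‖ ^ 2 + ‖u.2.1‖ ^ 2 + ‖u.2.2‖ ^ 2) := by
        rw [mul_assoc, ← sq]
        exact mul_le_mul_of_nonneg_left (norm_prod_prod_sq_le u) hκ.le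
    _ ≤ (γ₁⁻¹ - s * M) * ‖u.1‖ ^ 2 + (γ₂⁻¹ - s⁻¹) * (‖u.2.1‖ ^ 2 + ‖u.2.2‖ ^ 2) := by
        nlinarith [sq_nonneg ‖u.1‖, sq_nonneg ‖u.2.1‖, sq_nonneg ‖u.2.2‖]
    _ ≤ pdsForm Φ γ₁ γ₂ u u := le_pdsForm_apply_self Φ γ₁ γ₂ hs u

end PrimalDual

section PrimalDualStep

open scoped InnerProduct

variable {H : Type*} [NormedAddCommGroup H] [InnerProductSpace ℝ H] [CompleteSpace H]
  (A : H → Set H) (F G : H → EReal) (Φ : H →L[ℝ] H) (γ₁ γ₂ : ℝ)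

/-- `w` is the unrelaxed primal-dual step from `z`, with the resolvent of `A` and the two
proximity operators replaced by the inclusions that characterize them. -/
def IsPDSStep (z w : H × H × H) : Prop :=
  z.1 - γ₁ • ((Φ†) z.2.1 + z.2.2) - w.1 ∈ A w.1 ∧
    γ₂⁻¹ • (z.2.1 + γ₂ • Φ ((2 : ℝ) • w.1 - z.1) - w.2.1) ∈ SubdiffE F w.2.1 ∧
    γ₂⁻¹ • (z.2.2 + γ₂ • ((2 : ℝ) • w.1 - z.1) - w.2.2) ∈ SubdiffE G w.2.2

variable {A F G Φ γ₁ γ₂}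

lemma isPDSStep_self_iff (hγ₁ : γ₁ ≠ 0) (hγ₂ : γ₂ ≠ 0) {s : H × H × H} :
    IsPDSStep A F G Φ γ₁ γ₂ s s ↔
      (∃ u ∈ A s.1, (1 / γ₁) • u + (Φ†) s.2.1 + s.2.2 = 0) ∧
      (∃ w ∈ SubdiffE F s.2.1, -(Φ s.1) + w = 0) ∧
      (∃ w ∈ SubdiffE G s.2.2, -s.1 + w = 0) := by
  have hA (u : H) : (1 / γ₁) • u + (Φ†) s.2.1 + s.2.2 = 0 ↔ u = -(γ₁ • ((Φ†) s.2.1 + s.2.2)) := by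
    rw [add_assoc, add_eq_zero_iff_eq_neg, one_div, inv_smul_eq_iff₀ hγ₁, smul_neg]
  simp only [IsPDSStep, hA, neg_add_eq_zero, exists_eq_right', exists_eq_right, sub_sub_cancel_left,
    two_smul, add_sub_cancel_right, add_sub_cancel_left, inv_smul_smul₀ hγ₂]

lemma pdsForm_nonneg_of_isPDSStep (hA : MonotoneOp A) (hF : ProperE F) (hG : ProperE G)
    (hγ₁ : 0 < γ₁) (hγ₂ : γ₂ ≠ 0) {z w s : H × H × H} (hzw : IsPDSStep A F G Φ γ₁ γ₂ z w)
    (hs : IsPDSStep A F G Φ γ₁ γ₂ s s) : 0 ≤ pdsForm Φ γ₁ γ₂ (w - s) (z - w) := by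
  have m₁ : 0 ≤ ⟪w.1 - s.1, γ₁⁻¹ • ((z.1 - γ₁ • ((Φ†) z.2.1 + z.2.2) - w.1)
      - (s.1 - γ₁ • ((Φ†) s.2.1 + s.2.2) - s.1))⟫ := by
    rw [real_inner_smul_right]
    exact mul_nonneg (inv_nonneg.2 hγ₁.le) (hA hzw.1 hs.1)
  have m₂ := monotoneOp_subdiffE hF hzw.2.1 hs.2.1
  have m₃ := monotoneOp_subdiffE hG hzw.2.2 hs.2.2
  -- the claim is exactly the sum `m₁ + m₂ + m₃`
  obtain ⟨x, y₁, y₂⟩ := z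
  obtain ⟨x', y₁', y₂'⟩ := w
  obtain ⟨a, b₁, b₂⟩ := s
  simp only [smul_sub, smul_add, inv_smul_smul₀ hγ₁.ne', inv_smul_smul₀ hγ₂, map_sub,
    map_smul] at m₁ m₂ m₃
  rw [pdsForm_apply]
  simp only [Prod.mk_sub_mk, map_sub, inner_sub_left, inner_sub_right, inner_add_right,
    inner_smul_right, ContinuousLinearMap.adjoint_inner_right, real_inner_comm] at m₁ m₂ m₃ ⊢
  linarith

lemma isPDSStep_of_tendsto (hA : MaximallyMonotone A) (hF : LowerSemicontinuous F)
    (hG : LowerSemicontinuous G) {z w : ℕ → H × H × H} {s : H × H × H}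
    (hzw : ∀ k, IsPDSStep A F G Φ γ₁ γ₂ (z k) (w k))
    (hz : Tendsto z atTop (𝓝 s)) (hw : Tendsto w atTop (𝓝 s)) : IsPDSStep A F G Φ γ₁ γ₂ s s := by
  have hlim {f : (H × H × H) × (H × H × H) → H} (hf : Continuous f) :
      Tendsto (fun k => f (z k, w k)) atTop (𝓝 (f (s, s))) :=
    (hf.tendsto _).comp (hz.prodMk_nhds hw)
  refine ⟨hA.mem_of_tendsto (fun k => (hzw k).1) hw.fst_nhds
      (hlim (f := fun p => p.1.1 - γ₁ • ((Φ†) p.1.2.1 + p.1.2.2) - p.2.1) (by fun_prop)),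
    mem_subdiffE_of_tendsto hF (fun k => (hzw k).2.1) hw.snd_nhds.fst_nhds
      (hlim (f := fun p => γ₂⁻¹ • (p.1.2.1 + γ₂ • Φ ((2 : ℝ) • p.2.1 - p.1.1) - p.2.2.1))
        (by fun_prop)),
    mem_subdiffE_of_tendsto hG (fun k => (hzw k).2.2) hw.snd_nhds.snd_nhds
      (hlim (f := fun p => γ₂⁻¹ • (p.1.2.2 + γ₂ • ((2 : ℝ) • p.2.1 - p.1.1) - p.2.2.2))
        (by fun_prop))⟩

end PrimalDualStep

theorem pnp_pds_convergence_image_restoration_general (K : ℕ)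
    (Φ : EuclideanSpace ℝ (Fin K) →L[ℝ] EuclideanSpace ℝ (Fin K))
    (D : EuclideanSpace ℝ (Fin K) → EReal)
    (hDproper : ProperE D)
    (C : Set (EuclideanSpace ℝ (Fin K)))
    (hCne : C.Nonempty)
    (A : EuclideanSpace ℝ (Fin K) → Set (EuclideanSpace ℝ (Fin K)))
    (hA : MaximallyMonotone A)
    (J : EuclideanSpace ℝ (Fin K) → EuclideanSpace ℝ (Fin K))
    (hJres : ∀ x, x - J x ∈ A (J x))
    (γ₁ γ₂ : ℝ) (hγ₁ : 0 < γ₁) (hγ₂ : 0 < γ₂)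
    (hcond : 1 / γ₁ - γ₂ * (‖Φ‖ ^ 2 + 1) > 0)
    (ρ : ℕ → ℝ) (hρ : ∀ n, ρ n ∈ Set.Ioo (0 : ℝ) 2)
    (hρsum : Tendsto (fun N => ∑ n ∈ Finset.range N, ρ n * (2 - ρ n)) atTop atTop)
    (hsol : ∃ (xh y1h y2h : EuclideanSpace ℝ (Fin K)),
      (∃ u ∈ A xh, (1 / γ₁) • u + (ContinuousLinearMap.adjoint Φ) y1h + y2h = 0) ∧
      (∃ w ∈ SubdiffE (ConjE D) y1h, -(Φ xh) + w = 0) ∧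
      (∃ w ∈ SubdiffE (ConjE (indicatorE C)) y2h, -xh + w = 0))
    (x y1 y2 xt y1t y2t : ℕ → EuclideanSpace ℝ (Fin K))
    (hxt : ∀ n, xt (n + 1) =
      J (x n - γ₁ • ((ContinuousLinearMap.adjoint Φ) (y1 n) + y2 n)))
    (hy1t : ∀ n, IsProxPt γ₂ (ConjE D)
      (y1 n + γ₂ • Φ ((2 : ℝ) • xt (n + 1) - x n)) (y1t (n + 1)))
    (hy2t : ∀ n, IsProxPt γ₂ (ConjE (indicatorE C))
      (y2 n + γ₂ • ((2 : ℝ) • xt (n + 1) - x n)) (y2t (n + 1)))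
    (hx : ∀ n, x (n + 1) = ρ n • xt (n + 1) + (1 - ρ n) • x n)
    (hy1 : ∀ n, y1 (n + 1) = ρ n • y1t (n + 1) + (1 - ρ n) • y1 n)
    (hy2 : ∀ n, y2 (n + 1) = ρ n • y2t (n + 1) + (1 - ρ n) • y2 n) :
    ∃ (xs y1s y2s : EuclideanSpace ℝ (Fin K)),
      Tendsto x atTop (nhds xs) ∧ Tendsto y1 atTop (nhds y1s) ∧
      Tendsto y2 atTop (nhds y2s) ∧
      (∃ u ∈ A xs, (1 / γ₁) • u + (ContinuousLinearMap.adjoint Φ) y1s + y2s = 0) ∧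
      (∃ w ∈ SubdiffE (ConjE D) y1s, -(Φ xs) + w = 0) ∧
      (∃ w ∈ SubdiffE (ConjE (indicatorE C)) y2s, -xs + w = 0) := by
  obtain ⟨xh, y1h, y2h, hsol⟩ := hsol
  rcases subsingleton_or_nontrivial (EuclideanSpace ℝ (Fin K)) with hK | hK
  · have hconst {z : ℕ → EuclideanSpace ℝ (Fin K)} {c} : Tendsto z atTop (𝓝 c) :=
      tendsto_const_nhds.congr fun _ => Subsingleton.elim _ _
    exact ⟨xh, y1h, y2h, hconst, hconst, hconst, hsol⟩
  have hC := properE_indicatorE hCne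
  have hF : ProperE (ConjE D) := ⟨(hy1t 0).exists_ne_top, conjE_ne_bot hDproper⟩
  have hG : ProperE (ConjE (indicatorE C)) := ⟨(hy2t 0).exists_ne_top, conjE_ne_bot hC⟩
  have hstep (n : ℕ) : IsPDSStep A (ConjE D) (ConjE (indicatorE C)) Φ γ₁ γ₂
      (x n, y1 n, y2 n) (xt (n + 1), y1t (n + 1), y2t (n + 1)) :=
    ⟨hxt n ▸ hJres _, (hy1t n).smul_sub_mem_subdiffE hF (convexE_conjE hDproper.2),
      (hy2t n).smul_sub_mem_subdiffE hG (convexE_conjE hC.2)⟩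
  have hrelax (n : ℕ) : (x (n + 1), y1 (n + 1), y2 (n + 1)) = (x n, y1 n, y2 n)
      - ρ n • ((x n, y1 n, y2 n) - (xt (n + 1), y1t (n + 1), y2t (n + 1))) := by
    simp only [hx, hy1, hy2, Prod.mk_sub_mk, Prod.smul_mk, Prod.mk.injEq]
    exact ⟨by module, by module, by module⟩
  obtain ⟨s, hs, hlim⟩ := exists_tendsto_of_relaxed_iteration (pdsForm_comm Φ γ₁ γ₂)
    (isCoercive_pdsForm Φ γ₁ γ₂ hγ₂ (by rw [← one_div]; linarith))
    ⟨(xh, y1h, y2h), (isPDSStep_self_iff hγ₁.ne' hγ₂.ne').2 hsol⟩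
    (fun n => Set.Ioo_subset_Icc_self (hρ n)) hρsum hrelax
    (fun s hs n => pdsForm_nonneg_of_isPDSStep hA.1 hF hG hγ₁ hγ₂.ne' (hstep n) hs)
    (fun φ s hz hw => isPDSStep_of_tendsto hA (lowerSemicontinuous_conjE _)
      (lowerSemicontinuous_conjE _) (fun k => hstep (φ k)) hz hw)
  exact ⟨s.1, s.2.1, s.2.2, hlim.fst_nhds, hlim.snd_nhds.fst_nhds, hlim.snd_nhds.snd_nhds,
    (isPDSStep_self_iff hγ₁.ne' hγ₂.ne').1 hs⟩

/-- convergence of the PnP-PDS iteration for image restoration with a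
data-fidelity term `D` and a constraint set `C`. -/
theorem pnp_pds_convergence_image_restoration (K : ℕ)
    (Φ : EuclideanSpace ℝ (Fin K) →L[ℝ] EuclideanSpace ℝ (Fin K))
    (D : EuclideanSpace ℝ (Fin K) → EReal)
    (hDproper : ProperE D) (hDlsc : LowerSemicontinuous D) (hDconv : ConvexE D)
    (C : Set (EuclideanSpace ℝ (Fin K)))
    (hCne : C.Nonempty) (hCclosed : IsClosed C) (hCconv : Convex ℝ C)
    (A : EuclideanSpace ℝ (Fin K) → Set (EuclideanSpace ℝ (Fin K)))
    (hA : MaximallyMonotone A)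
    (J : EuclideanSpace ℝ (Fin K) → EuclideanSpace ℝ (Fin K))
    (hJres : ∀ x, x - J x ∈ A (J x))
    (hJuniq : ∀ x p, x - p ∈ A p → p = J x)
    (γ₁ γ₂ : ℝ) (hγ₁ : 0 < γ₁) (hγ₂ : 0 < γ₂)
    (hcond : 1 / γ₁ - γ₂ * (‖Φ‖ ^ 2 + 1) > 0)
    (ρ : ℕ → ℝ) (hρ : ∀ n, ρ n ∈ Set.Ioo (0 : ℝ) 2)
    (hρsum : Tendsto (fun N => ∑ n ∈ Finset.range N, ρ n * (2 - ρ n)) atTop atTop)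
    (hsol : ∃ (xh y1h y2h : EuclideanSpace ℝ (Fin K)),
      (∃ u ∈ A xh, (1 / γ₁) • u + (ContinuousLinearMap.adjoint Φ) y1h + y2h = 0) ∧
      (∃ w ∈ SubdiffE (ConjE D) y1h, -(Φ xh) + w = 0) ∧
      (∃ w ∈ SubdiffE (ConjE (indicatorE C)) y2h, -xh + w = 0))
    (x y1 y2 xt y1t y2t : ℕ → EuclideanSpace ℝ (Fin K))
    (hxt : ∀ n, xt (n + 1) =
      J (x n - γ₁ • ((ContinuousLinearMap.adjoint Φ) (y1 n) + y2 n)))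
    (hy1t : ∀ n, IsProxPt γ₂ (ConjE D)
      (y1 n + γ₂ • Φ ((2 : ℝ) • xt (n + 1) - x n)) (y1t (n + 1)))
    (hy2t : ∀ n, IsProxPt γ₂ (ConjE (indicatorE C))
      (y2 n + γ₂ • ((2 : ℝ) • xt (n + 1) - x n)) (y2t (n + 1)))
    (hx : ∀ n, x (n + 1) = ρ n • xt (n + 1) + (1 - ρ n) • x n)
    (hy1 : ∀ n, y1 (n + 1) = ρ n • y1t (n + 1) + (1 - ρ n) • y1 n)
    (hy2 : ∀ n, y2 (n + 1) = ρ n • y2t (n + 1) + (1 - ρ n) • y2 n) :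
    ∃ (xs y1s y2s : EuclideanSpace ℝ (Fin K)),
      Tendsto x atTop (nhds xs) ∧ Tendsto y1 atTop (nhds y1s) ∧
      Tendsto y2 atTop (nhds y2s) ∧
      (∃ u ∈ A xs, (1 / γ₁) • u + (ContinuousLinearMap.adjoint Φ) y1s + y2s = 0) ∧
      (∃ w ∈ SubdiffE (ConjE D) y1s, -(Φ xs) + w = 0) ∧
      (∃ w ∈ SubdiffE (ConjE (indicatorE C)) y2s, -xs + w = 0) :=
  pnp_pds_convergence_image_restoration_general K Φ D hDproper C hCne A hA J hJres γ₁ γ₂ hγ₁ hγ₂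
    hcond ρ hρ hρsum hsol x y1 y2 xt y1t y2t hxt hy1t hy2t hx hy1 hy2

end
end

section
/- Let H be a real Hilbert space and J : H → H a firmly nonexpansive operator defined on all of H. Define the set-valued operator A : H → 2^H by A(p) = {x − p : x ∈ H, J(x) = p} (that is, A = J⁻¹ − Id). Then A is maximally monotone, and for every x ∈ H, J(x) is the unique point p ∈ H satisfying x − p ∈ A(p); in other words, J = (Id + A)⁻¹ for a maximally monotone operator A. -/
open Filter Topology RealInnerProductSpace

noncomputable section

/-- Firm nonexpansiveness: `2T - Id` is nonexpansive. -/
def FirmlyNonexpansive {H : Type*} [NormedAddCommGroup H] [InnerProductSpace ℝ H]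
    (T : H → H) : Prop :=
  ∀ x y : H, ‖((2 : ℝ) • T x - x) - ((2 : ℝ) • T y - y)‖ ≤ ‖x - y‖

lemma firm_inner_aux {H : Type*} [NormedAddCommGroup H] [InnerProductSpace ℝ H]
    (J : H → H) (hJ : FirmlyNonexpansive J) (x y : H) :
    ‖J x - J y‖ ^ 2 ≤ ⟪x - y, J x - J y⟫ := by
  have h := hJ x y
  have h2 : ‖((2 : ℝ) • J x - x) - ((2 : ℝ) • J y - y)‖ ^ 2 ≤ ‖x - y‖ ^ 2 := by
    have := norm_nonneg (((2 : ℝ) • J x - x) - ((2 : ℝ) • J y - y))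
    nlinarith [norm_nonneg (x - y)]
  have e1 : ((2 : ℝ) • J x - x) - ((2 : ℝ) • J y - y)
      = (2 : ℝ) • (J x - J y) - (x - y) := by abel_nf; simp [smul_sub]; abel
  rw [e1] at h2
  have e2 : ‖(2 : ℝ) • (J x - J y) - (x - y)‖ ^ 2
      = 4 * ‖J x - J y‖ ^ 2 - 4 * ⟪x - y, J x - J y⟫ + ‖x - y‖ ^ 2 := by
    rw [norm_sub_sq_real, norm_smul, real_inner_smul_left, real_inner_comm]
    simp [mul_pow]
    ring
  rw [e2] at h2
  linarith

/-- a firmly nonexpansive operator defined on the whole space is the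
resolvent of a maximally monotone operator, namely `A = J⁻¹ - Id`. -/
theorem firmly_nonexpansive_is_resolvent_of_maximally_monotone

    {H : Type*} [NormedAddCommGroup H] [InnerProductSpace ℝ H]
    (J : H → H) (hJ : FirmlyNonexpansive J)
    (A : H → Set H) (hA : ∀ p, A p = {w | ∃ x : H, J x = p ∧ w = x - p}) :
    MaximallyMonotone A ∧
      ∀ x : H, x - J x ∈ A (J x) ∧ ∀ p : H, x - p ∈ A p → p = J x := by
  have hmono : MonotoneOp A := by
    intro p p' w w' hw hw'
    rw [hA] at hw hw'
    obtain ⟨x, hx, rfl⟩ := hw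
    obtain ⟨x', hx', rfl⟩ := hw'
    subst hx; subst hx'
    have h := firm_inner_aux J hJ x x'
    have e : (x - J x) - (x' - J x') = (x - x') - (J x - J x') := by abel
    rw [e, inner_sub_right]
    have h1 := real_inner_comm (J x - J x') (x - x')
    have h2 := real_inner_self_eq_norm_sq (J x - J x')
    linarith
  have huniq : ∀ x p : H, x - p ∈ A p → p = J x := by
    intro x p hp
    rw [hA] at hp
    obtain ⟨y, hy, he⟩ := hp
    have hyx : y = x := sub_left_injective he.symm
    subst hyx; exact hy.symm
  refine ⟨⟨hmono, ?_⟩, fun x => ⟨by rw [hA]; exact ⟨x, rfl, rfl⟩, huniq x⟩⟩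
  intro B hB hAB p v hv
  set x := p + v with hx
  have hw : x - J x ∈ B (J x) := hAB _ (by rw [hA]; exact ⟨x, rfl, rfl⟩)
  have h := hB hv hw
  have e : v - (x - J x) = J x - p := by rw [hx]; abel
  rw [e] at h
  have : ‖p - J x‖ ^ 2 ≤ 0 := by
    rw [← real_inner_self_eq_norm_sq]
    have : ⟪p - J x, J x - p⟫ = - ⟪p - J x, p - J x⟫ := by
      rw [← inner_neg_right]; congr 1; abel
    linarith
  have hpj : p = J x := by
    have hnn := norm_nonneg (p - J x)
    have hn : ‖p - J x‖ = 0 := by nlinarith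
    exact sub_eq_zero.mp (norm_eq_zero.mp hn)
  rw [hA]
  exact ⟨x, hpj.symm, by rw [hx, hpj]; abel⟩

end
end

section
/- Let H be a real Hilbert space, B₁ : H → 2^H a maximally monotone operator, and B₂ : H → H a κ-cocoercive operator for some κ > 0. Suppose the set zer(B₁ + B₂) = {s ∈ H : 0 ∈ B₁(s) + B₂(s)} is nonempty. Let γ ∈ (0, 2κ), set δ := 2 − γ/(2κ), and let (ρ_n) satisfy ρ_n ∈ (0, δ) for all n and Σ_n ρ_n(δ − ρ_n) = ∞. Then for any s₀ ∈ H, the sequence generated by s_{n+1} = ρ_n (Id + γB₁)⁻¹(s_n − γB₂(s_n)) + (1 − ρ_n)s_n converges weakly to a point ŝ ∈ zer(B₁ + B₂). -/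
open Filter Topology RealInnerProductSpace

noncomputable section

/-!
Writing `T = (Id + γB₁)⁻¹ ∘ (Id - γB₂)` and `S = Id + δ(T - Id)`, the iteration reads
`s (n+1) = s n + λ n (S (s n) - s n)` with `λ n = ρ n / δ ∈ (0, 1)`, a Krasnosel'skii–Mann
iteration, and the fixed points of `S` are the zeros of `B₁ + B₂`. The map `S` is nonexpansive
because `T`, the composition of a firmly nonexpansive resolvent with the `γ/(2κ)`-averaged forward
step, is `1/δ`-averaged. For a Krasnosel'skii–Mann iteration of a nonexpansive `S`, the distance
to every fixed point decreases (Fejér monotonicity) and `∑ λ n (1 - λ n) ‖S (s n) - s n‖² < ∞`;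
as `‖S (s n) - s n‖` is nonincreasing and `∑ λ n (1 - λ n) = ∞`, the residual tends to `0`. By
demiclosedness of `Id - S` every weak cluster point is then a fixed point, and Opial's argument
shows that there is only one. Weak cluster points are taken along ultrafilters, where bounded
sequences always have weak limits.
-/

open Function

/-- `WeakLim x p` is `WeakTendsto x atTop p`; other filters serve for weak cluster points. -/
def WeakTendsto {ι H : Type*} [NormedAddCommGroup H] [InnerProductSpace ℝ H]
    (x : ι → H) (l : Filter ι) (p : H) : Prop :=
  ∀ w : H, Tendsto (fun i => ⟪x i, w⟫) l (𝓝 ⟪p, w⟫)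

section WeakConvergence

variable {ι H : Type*} [NormedAddCommGroup H] [InnerProductSpace ℝ H]

theorem weakTendsto_iff_ultrafilter {x : ι → H} {l : Filter ι} {p : H} :
    WeakTendsto x l p ↔ ∀ U : Ultrafilter ι, ↑U ≤ l → WeakTendsto x U p := by
  simp only [WeakTendsto, tendsto_iff_ultrafilter _ l]
  exact ⟨fun h U hU w => h w U hU, fun h w U hU => h U hU w⟩

/-- Weak sequential compactness of balls, in ultrafilter form: the limits of `⟪x i, w⟫` along
`U` exist by compactness of intervals, and depend on `w` through a bounded linear functional,
which the Riesz representation theorem turns into a point. -/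
theorem exists_weakTendsto_ultrafilter_of_norm_le [CompleteSpace H] {x : ι → H} {C : ℝ}
    (hx : ∀ i, ‖x i‖ ≤ C) (U : Ultrafilter ι) : ∃ p, WeakTendsto x U p := by
  have hinner : ∀ w i, |⟪x i, w⟫| ≤ C * ‖w‖ := fun w i =>
    (abs_real_inner_le_norm _ _).trans (mul_le_mul_of_nonneg_right (hx i) (norm_nonneg w))
  have hlim : ∀ w, ∃ L, Tendsto (fun i => ⟪x i, w⟫) U (𝓝 L) := by
    intro w
    obtain ⟨L, -, hL⟩ := (isCompact_Icc (a := -(C * ‖w‖)) (b := C * ‖w‖)).ultrafilter_le_nhds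
      (U.map fun i => ⟪x i, w⟫)
      (by
        rw [Ultrafilter.coe_map, le_principal_iff, mem_map]
        exact univ_mem' fun i => abs_le.mp (hinner w i))
    exact ⟨L, by rwa [Ultrafilter.coe_map] at hL⟩
  choose φ hφ using hlim
  let f : H →ₗ[ℝ] ℝ :=
    { toFun := φ
      map_add' := fun u v => tendsto_nhds_unique (hφ (u + v)) <| by
        simpa only [inner_add_right] using (hφ u).add (hφ v)
      map_smul' := fun c u => tendsto_nhds_unique (hφ (c • u)) <| by
        simpa only [real_inner_smul_right, RingHom.id_apply, smul_eq_mul] using (hφ u).const_mul c }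
  have hf : ∀ w, ‖f w‖ ≤ C * ‖w‖ := fun w =>
    le_of_tendsto (hφ w).abs (Eventually.of_forall (hinner w))
  refine ⟨(InnerProductSpace.toDual ℝ H).symm (f.mkContinuous C hf), fun w => ?_⟩
  rw [InnerProductSpace.toDual_symm_apply]
  exact hφ w

end WeakConvergence

theorem norm_le_of_antitone_norm_sub {E : Type*} [SeminormedAddCommGroup E] {x : ℕ → E} {z : E}
    (hx : Antitone fun n => ‖x n - z‖) (n : ℕ) : ‖x n‖ ≤ ‖x 0 - z‖ + ‖z‖ :=
  calc ‖x n‖ ≤ ‖x n - z‖ + ‖z‖ := norm_le_norm_sub_add _ _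
    _ ≤ ‖x 0 - z‖ + ‖z‖ := by gcongr; exact hx (Nat.zero_le n)

section Fejer

variable {H : Type*} [NormedAddCommGroup H] [InnerProductSpace ℝ H] {x : ℕ → H}

/-- `2 ⟪x n, p - q⟫` differs from `‖x n - q‖ ^ 2 - ‖x n - p‖ ^ 2` by a constant, so it converges,
and its limit is both `2 ⟪p, p - q⟫` and `2 ⟪q, p - q⟫`. -/
theorem eq_of_weakTendsto_of_tendsto_norm_sub {l₁ l₂ : Filter ℕ} [l₁.NeBot] [l₂.NeBot]
    (h₁ : l₁ ≤ atTop) (h₂ : l₂ ≤ atTop) {p q : H} {a b : ℝ}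
    (hp : Tendsto (fun n => ‖x n - p‖) atTop (𝓝 a))
    (hq : Tendsto (fun n => ‖x n - q‖) atTop (𝓝 b))
    (hxp : WeakTendsto x l₁ p) (hxq : WeakTendsto x l₂ q) : p = q := by
  have hpolar : ∀ n, ⟪x n, p - q⟫ = (‖x n - q‖ ^ 2 - ‖x n - p‖ ^ 2 + ‖p‖ ^ 2 - ‖q‖ ^ 2) / 2 := by
    intro n
    rw [inner_sub_right, norm_sub_sq_real, norm_sub_sq_real]
    ring
  have hlim : Tendsto (fun n => ⟪x n, p - q⟫) atTop
      (𝓝 ((b ^ 2 - a ^ 2 + ‖p‖ ^ 2 - ‖q‖ ^ 2) / 2)) := by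
    simp only [hpolar]
    exact ((((hq.pow 2).sub (hp.pow 2)).add_const _).sub_const _).div_const 2
  have hp' := tendsto_nhds_unique (hxp (p - q)) (hlim.mono_left h₁)
  have hq' := tendsto_nhds_unique (hxq (p - q)) (hlim.mono_left h₂)
  have : ⟪p - q, p - q⟫ = 0 := by rw [inner_sub_left, hp', hq', sub_self]
  exact sub_eq_zero.mp (inner_self_eq_zero.mp this)

/-- Opial's lemma, with weak sequential cluster points replaced by weak limits along
ultrafilters finer than `atTop`. -/
theorem exists_weakTendsto_of_fejer [CompleteSpace H] {C : Set H} (hC : C.Nonempty)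
    (hfejer : ∀ z ∈ C, Antitone fun n => ‖x n - z‖)
    (hclust : ∀ (U : Ultrafilter ℕ) (p : H), (U : Filter ℕ) ≤ atTop → WeakTendsto x U p →
      p ∈ C) :
    ∃ p ∈ C, WeakTendsto x atTop p := by
  obtain ⟨z, hz⟩ := hC
  have hdist : ∀ y ∈ C, ∃ a, Tendsto (fun n => ‖x n - y‖) atTop (𝓝 a) := fun y hy =>
    ⟨_, tendsto_atTop_ciInf (hfejer y hy) ⟨0, by rintro _ ⟨n, rfl⟩; positivity⟩⟩
  have hcluster : ∀ U : Ultrafilter ℕ, (U : Filter ℕ) ≤ atTop → ∃ p ∈ C, WeakTendsto x U p :=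
    fun U hU =>
    have ⟨p, hp⟩ := exists_weakTendsto_ultrafilter_of_norm_le
      (norm_le_of_antitone_norm_sub (hfejer z hz)) U
    ⟨p, hclust U p hU hp, hp⟩
  obtain ⟨p₀, hp₀C, hp₀⟩ := hcluster (Ultrafilter.of atTop) (Ultrafilter.of_le _)
  refine ⟨p₀, hp₀C, weakTendsto_iff_ultrafilter.mpr fun U hU => ?_⟩
  obtain ⟨p, hpC, hp⟩ := hcluster U hU
  obtain ⟨a, ha⟩ := hdist p hpC
  obtain ⟨b, hb⟩ := hdist p₀ hp₀C
  rwa [eq_of_weakTendsto_of_tendsto_norm_sub hU (Ultrafilter.of_le _) ha hb hp hp₀] at hp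

end Fejer

/-- The limit `L` of `r` satisfies `L ^ 2 * ∑ c n ≤ B`. -/
theorem tendsto_zero_of_antitone_of_sum_mul_sq_le {r c : ℕ → ℝ} {B : ℝ} (hr : Antitone r)
    (hr0 : ∀ n, 0 ≤ r n) (hc : ∀ n, 0 ≤ c n)
    (hcsum : Tendsto (fun N => ∑ n ∈ Finset.range N, c n) atTop atTop)
    (hbdd : ∀ N, ∑ n ∈ Finset.range N, c n * r n ^ 2 ≤ B) : Tendsto r atTop (𝓝 0) := by
  have hlim := tendsto_atTop_ciInf hr ⟨0, by rintro _ ⟨n, rfl⟩; exact hr0 n⟩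
  set L := ⨅ n, r n
  have hL0 : 0 ≤ L := le_ciInf hr0
  have hL_le : ∀ n, L ≤ r n := fun n => ciInf_le ⟨0, by rintro _ ⟨m, rfl⟩; exact hr0 m⟩ n
  suffices hL : L = 0 by rwa [hL] at hlim
  by_contra hL
  have hLpos : 0 < L ^ 2 := by positivity
  have hsum_le : ∀ N, ∑ n ∈ Finset.range N, c n ≤ B / L ^ 2 := fun N => by
    rw [le_div_iff₀ hLpos, Finset.sum_mul]
    refine le_trans (Finset.sum_le_sum fun n _ => ?_) (hbdd N)
    exact mul_le_mul_of_nonneg_left (pow_le_pow_left₀ hL0 (hL_le n) 2) (hc n)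
  obtain ⟨N, hN⟩ := (hcsum.eventually_gt_atTop (B / L ^ 2)).exists
  exact (hsum_le N).not_gt hN

section Nonexpansive

variable {H : Type*} [NormedAddCommGroup H] [InnerProductSpace ℝ H] {S : H → H}

theorem norm_add_smul_sub_sq (u v : H) (t : ℝ) :
    ‖u + t • (v - u)‖ ^ 2 = (1 - t) * ‖u‖ ^ 2 + t * ‖v‖ ^ 2 - t * (1 - t) * ‖v - u‖ ^ 2 := by
  simp only [← real_inner_self_eq_norm_sq, inner_add_left, inner_add_right, inner_sub_left,
    inner_sub_right, real_inner_smul_left, real_inner_smul_right, real_inner_comm u v]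
  ring

/-- Demiclosedness of `Id - S` at `0`: pass to the limit in
`‖S p - p‖ ^ 2 ≤ d ^ 2 + 2 d ‖x - p‖ + 2 ⟪x - p, S p - p⟫`, where `d = ‖S x - x‖`. -/
theorem isFixedPt_of_weakTendsto (hS : LipschitzWith 1 S) {ι : Type*} {l : Filter ι} [l.NeBot]
    {x : ι → H} {p : H} {C : ℝ} (hx : ∀ i, ‖x i‖ ≤ C) (hxp : WeakTendsto x l p)
    (hres : Tendsto (fun i => ‖S (x i) - x i‖) l (𝓝 0)) : IsFixedPt S p := by
  set d := fun i => ‖S (x i) - x i‖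
  have hbound : ∀ i, ‖S p - p‖ ^ 2
      ≤ d i ^ 2 + 2 * d i * (C + ‖p‖) + 2 * (⟪x i, S p - p⟫ - ⟪p, S p - p⟫) := by
    intro i
    have htri : ‖x i - S p‖ ≤ d i + ‖x i - p‖ :=
      calc ‖x i - S p‖ ≤ ‖x i - S (x i)‖ + ‖S (x i) - S p‖ := norm_sub_le_norm_sub_add_norm_sub ..
        _ ≤ d i + ‖x i - p‖ := by
          rw [norm_sub_rev]
          gcongr
          simpa using hS.norm_sub_le (x i) p
    have hxp_le : ‖x i - p‖ ≤ C + ‖p‖ := (norm_sub_le _ _).trans (by linarith [hx i])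
    have hexp : ‖x i - S p‖ ^ 2 = ‖x i - p‖ ^ 2 - 2 * ⟪x i - p, S p - p⟫ + ‖S p - p‖ ^ 2 := by
      rw [← norm_sub_sq_real]; congr 2; abel
    rw [inner_sub_left] at hexp
    nlinarith [norm_nonneg (x i - S p), norm_nonneg (x i - p), norm_nonneg (S (x i) - x i)]
  have hlim : Tendsto (fun i => d i ^ 2 + 2 * d i * (C + ‖p‖) + 2 * (⟪x i, S p - p⟫ - ⟪p, S p - p⟫))
      l (𝓝 0) := by
    simpa using ((hres.pow 2).add ((hres.const_mul 2).mul_const (C + ‖p‖))).add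
      (((hxp (S p - p)).sub_const ⟪p, S p - p⟫).const_mul 2)
  have : ‖S p - p‖ ^ 2 ≤ 0 := ge_of_tendsto hlim (Eventually.of_forall hbound)
  exact sub_eq_zero.mp (norm_eq_zero.mp (pow_eq_zero_iff two_ne_zero |>.mp
    (le_antisymm this (sq_nonneg _))))

end Nonexpansive

section KrasnoselskiiMann

variable {H : Type*} [NormedAddCommGroup H] [InnerProductSpace ℝ H] {S : H → H}

theorem norm_add_smul_sub_sub_sq_le (hS : LipschitzWith 1 S) {z : H} (hz : IsFixedPt S z)
    {t : ℝ} (ht : t ∈ Set.Icc (0 : ℝ) 1) (u : H) :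
    ‖u + t • (S u - u) - z‖ ^ 2 ≤ ‖u - z‖ ^ 2 - t * (1 - t) * ‖S u - u‖ ^ 2 := by
  have hSu : ‖S u - z‖ ≤ ‖u - z‖ := by simpa [hz.eq] using hS.norm_sub_le u z
  have hsq := pow_le_pow_left₀ (norm_nonneg _) hSu 2
  have h := norm_add_smul_sub_sq (u - z) (S u - z) t
  rw [sub_sub_sub_cancel_right] at h
  rw [show u + t • (S u - u) - z = u - z + t • (S u - u) by abel, h]
  nlinarith [ht.1, ht.2]

theorem norm_sub_add_smul_sub_le (hS : LipschitzWith 1 S) {t : ℝ} (ht : t ∈ Set.Icc (0 : ℝ) 1)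
    (u : H) : ‖S (u + t • (S u - u)) - (u + t • (S u - u))‖ ≤ ‖S u - u‖ :=
  calc ‖S (u + t • (S u - u)) - (u + t • (S u - u))‖
      ≤ ‖S (u + t • (S u - u)) - S u‖ + ‖(1 - t) • (S u - u)‖ := by
        rw [show S (u + t • (S u - u)) - (u + t • (S u - u))
          = S (u + t • (S u - u)) - S u + (1 - t) • (S u - u) by module]
        exact norm_add_le _ _
    _ ≤ ‖t • (S u - u)‖ + ‖(1 - t) • (S u - u)‖ := by
        gcongr
        simpa using hS.norm_sub_le (u + t • (S u - u)) u
    _ = ‖S u - u‖ := by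
        rw [norm_smul, norm_smul, Real.norm_of_nonneg ht.1, Real.norm_of_nonneg (sub_nonneg.2 ht.2)]
        ring

theorem exists_weakTendsto_krasnoselskiiMann [CompleteSpace H] (hS : LipschitzWith 1 S)
    (hfix : (fixedPoints S).Nonempty) {t : ℕ → ℝ} (ht : ∀ n, t n ∈ Set.Icc (0 : ℝ) 1)
    (htsum : Tendsto (fun N => ∑ n ∈ Finset.range N, t n * (1 - t n)) atTop atTop)
    {x : ℕ → H} (hx : ∀ n, x (n + 1) = x n + t n • (S (x n) - x n)) :
    ∃ p, IsFixedPt S p ∧ WeakTendsto x atTop p := by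
  have hdescent : ∀ z ∈ fixedPoints S, ∀ n,
      ‖x (n + 1) - z‖ ^ 2 ≤ ‖x n - z‖ ^ 2 - t n * (1 - t n) * ‖S (x n) - x n‖ ^ 2 :=
    fun z hz n => hx n ▸ norm_add_smul_sub_sub_sq_le hS hz (ht n) (x n)
  have hfejer : ∀ z ∈ fixedPoints S, Antitone fun n => ‖x n - z‖ := by
    refine fun z hz => antitone_nat_of_succ_le fun n => ?_
    refine (sq_le_sq₀ (norm_nonneg _) (norm_nonneg _)).mp ((hdescent z hz n).trans ?_)
    have := mul_nonneg (mul_nonneg (ht n).1 (sub_nonneg.2 (ht n).2)) (sq_nonneg ‖S (x n) - x n‖)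
    linarith
  obtain ⟨z, hz⟩ := hfix
  have hbdd : ∀ N, ∑ n ∈ Finset.range N, t n * (1 - t n) * ‖S (x n) - x n‖ ^ 2
      ≤ ‖x 0 - z‖ ^ 2 := by
    have htel : ∀ N, ∑ n ∈ Finset.range N, t n * (1 - t n) * ‖S (x n) - x n‖ ^ 2
        ≤ ‖x 0 - z‖ ^ 2 - ‖x N - z‖ ^ 2 := by
      intro N
      induction N with
      | zero => simp
      | succ N ih => rw [Finset.sum_range_succ]; linarith [hdescent z hz N]
    exact fun N => (htel N).trans (sub_le_self _ (sq_nonneg _))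
  have hres : Tendsto (fun n => ‖S (x n) - x n‖) atTop (𝓝 0) :=
    tendsto_zero_of_antitone_of_sum_mul_sq_le
      (antitone_nat_of_succ_le fun n => hx n ▸ norm_sub_add_smul_sub_le hS (ht n) (x n))
      (fun n => norm_nonneg _) (fun n => mul_nonneg (ht n).1 (sub_nonneg.2 (ht n).2)) htsum hbdd
  refine exists_weakTendsto_of_fejer ⟨z, hz⟩ hfejer fun U p hU hp => ?_
  exact isFixedPt_of_weakTendsto hS (norm_le_of_antitone_norm_sub (hfejer z hz)) hp
    (hres.mono_left hU)

end KrasnoselskiiMann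

section ForwardBackward

variable {H : Type*} [NormedAddCommGroup H] [InnerProductSpace ℝ H]

theorem FirmlyNonexpansive.norm_sub_sq_le_inner {T : H → H} (hT : FirmlyNonexpansive T)
    (x y : H) : ‖T x - T y‖ ^ 2 ≤ ⟪x - y, T x - T y⟫ := by
  have h := pow_le_pow_left₀ (norm_nonneg _) (hT x y) 2
  rw [show (2 : ℝ) • T x - x - ((2 : ℝ) • T y - y) = (2 : ℝ) • (T x - T y) - (x - y) by module,
    norm_sub_sq_real, norm_smul, real_inner_smul_left, real_inner_comm] at h
  norm_num at h
  linarith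

theorem mul_norm_sub_sq_le_inner_of_firmlyNonexpansive_smul {B : H → H} {κ : ℝ} (hκ : 0 < κ)
    (hB : FirmlyNonexpansive fun x => κ • B x) (x y : H) :
    κ * ‖B x - B y‖ ^ 2 ≤ ⟪x - y, B x - B y⟫ := by
  have h := hB.norm_sub_sq_le_inner x y
  rw [← smul_sub, norm_smul, real_inner_smul_right, Real.norm_of_nonneg hκ.le, mul_pow] at h
  nlinarith

theorem MonotoneOp.norm_sub_sq_le_inner_of_resolvent {A : H → Set H} (hA : MonotoneOp A)
    {γ : ℝ} (hγ : 0 ≤ γ) {R : H → H} (hR : ∀ x, ∃ w ∈ A (R x), x - R x = γ • w) (u v : H) :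
    ‖R u - R v‖ ^ 2 ≤ ⟪u - v, R u - R v⟫ := by
  obtain ⟨wu, hwu, hu⟩ := hR u
  obtain ⟨wv, hwv, hv⟩ := hR v
  have hmono : 0 ≤ ⟪R u - R v, (u - R u) - (v - R v)⟫ := by
    rw [hu, hv, ← smul_sub, real_inner_smul_right]
    exact mul_nonneg hγ (hA hwu hwv)
  rw [show u - R u - (v - R v) = (u - v) - (R u - R v) by abel, inner_sub_right,
    real_inner_self_eq_norm_sq, real_inner_comm] at hmono
  linarith

/-- The `1/δ`-averagedness of a forward-backward step, on increments: `a` of the resolvent,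
`e` of the identity, `b` of the cocoercive map. It rests on the identity
`δ ‖a - e‖² + 2 ⟪a - e, e⟫`
`  = 2 (‖a‖² - ⟪e - γ b, a⟫) - 2 γ (⟪e, b⟫ - κ ‖b‖²) - γ/(2κ) ‖a - e + 2κ b‖²`. -/
theorem norm_add_smul_sub_le_of_cocoercive {κ γ δ : ℝ} (hκ : 0 < κ) (hγ : 0 ≤ γ)
    (hδ : δ = 2 - γ / (2 * κ)) (hδ0 : 0 ≤ δ) {e a b : H}
    (ha : ‖a‖ ^ 2 ≤ ⟪e - γ • b, a⟫) (hb : κ * ‖b‖ ^ 2 ≤ ⟪e, b⟫) :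
    ‖e + δ • (a - e)‖ ≤ ‖e‖ := by
  set c := γ / (2 * κ)
  have hc : 0 ≤ c := by positivity
  have hγc : γ = 2 * κ * c := by simp only [c]; field_simp
  obtain ⟨d, rfl⟩ : ∃ d, a = e + d := ⟨a - e, by abel⟩
  have hsq : 0 ≤ c * ‖d + (2 * κ) • b‖ ^ 2 := by positivity
  have hkey : 2 * ⟪e, d⟫ + δ * ‖d‖ ^ 2 ≤ 0 := by
    simp only [← real_inner_self_eq_norm_sq, inner_add_left, inner_add_right, inner_sub_left,
      real_inner_smul_left, real_inner_smul_right, real_inner_comm e b, real_inner_comm d b,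
      real_inner_comm d e] at ha hb hsq ⊢
    rw [hγc] at ha
    rw [hδ]
    nlinarith [mul_le_mul_of_nonneg_left hb (by positivity : 0 ≤ 4 * κ * c)]
  refine (sq_le_sq₀ (norm_nonneg _) (norm_nonneg _)).mp ?_
  rw [add_sub_cancel_left, norm_add_sq_real, norm_smul, real_inner_smul_right,
    Real.norm_of_nonneg hδ0]
  nlinarith [mul_nonpos_of_nonneg_of_nonpos hδ0 hkey]

theorem lipschitzWith_one_relaxed_forwardBackward {A : H → Set H} (hA : MonotoneOp A)
    {B : H → H} {κ γ δ : ℝ} (hκ : 0 < κ) (hB : ∀ x y, κ * ‖B x - B y‖ ^ 2 ≤ ⟪x - y, B x - B y⟫)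
    (hγ : 0 ≤ γ) (hδ : δ = 2 - γ / (2 * κ)) (hδ0 : 0 ≤ δ) {R : H → H}
    (hR : ∀ x, ∃ w ∈ A (R x), x - R x = γ • w) :
    LipschitzWith 1 fun x => x + δ • (R (x - γ • B x) - x) := by
  refine LipschitzWith.mk_one fun x y => ?_
  rw [dist_eq_norm, dist_eq_norm,
    show x + δ • (R (x - γ • B x) - x) - (y + δ • (R (y - γ • B y) - y))
      = (x - y) + δ • ((R (x - γ • B x) - R (y - γ • B y)) - (x - y)) by module]
  refine norm_add_smul_sub_le_of_cocoercive hκ hγ hδ hδ0 ?_ (hB x y)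
  have h := hA.norm_sub_sq_le_inner_of_resolvent hγ hR (x - γ • B x) (y - γ • B y)
  rwa [show x - γ • B x - (y - γ • B y) = x - y - γ • (B x - B y) by module] at h

theorem resolvent_eq_iff {A : H → Set H} {γ : ℝ} {R : H → H}
    (hR : ∀ x, ∃ w ∈ A (R x), x - R x = γ • w)
    (hRuniq : ∀ x p, (∃ w ∈ A p, x - p = γ • w) → p = R x) {x p : H} :
    R x = p ↔ ∃ w ∈ A p, x - p = γ • w :=
  ⟨fun h => h ▸ hR x, fun h => (hRuniq x p h).symm⟩

theorem forwardBackward_eq_self_iff {A : H → Set H} {B : H → H} {γ : ℝ} (hγ : γ ≠ 0)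
    {R : H → H} (hR : ∀ x, ∃ w ∈ A (R x), x - R x = γ • w)
    (hRuniq : ∀ x p, (∃ w ∈ A p, x - p = γ • w) → p = R x) {z : H} :
    R (z - γ • B z) = z ↔ ∃ u ∈ A z, u + B z = 0 := by
  rw [resolvent_eq_iff hR hRuniq]
  refine exists_congr fun u => and_congr_right fun _ => ?_
  rw [sub_sub_cancel_left, neg_eq_iff_add_eq_zero, ← smul_add, smul_eq_zero, or_iff_right hγ,
    add_comm]

theorem isFixedPt_add_smul_sub_iff {T : H → H} {δ : ℝ} (hδ : δ ≠ 0) {z : H} :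
    IsFixedPt (fun x => x + δ • (T x - x)) z ↔ IsFixedPt T z := by
  simp [IsFixedPt, hδ, sub_eq_zero]

end ForwardBackward

/-- weak convergence of the relaxed forward-backward iteration
(Condat, Lemma 4.4). -/
theorem relaxed_forward_backward_weak_convergence
    {H : Type*} [NormedAddCommGroup H] [InnerProductSpace ℝ H] [CompleteSpace H]
    (B₁ : H → Set H) (hB₁ : MaximallyMonotone B₁)
    (B₂ : H → H) (κ : ℝ) (hκ : 0 < κ)
    (hB₂ : FirmlyNonexpansive (fun x => κ • B₂ x))
    (hzer : ∃ s : H, ∃ u ∈ B₁ s, u + B₂ s = 0)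
    (γ : ℝ) (hγ : γ ∈ Set.Ioo 0 (2 * κ))
    (δ : ℝ) (hδ : δ = 2 - γ / (2 * κ))
    (ρ : ℕ → ℝ) (hρ : ∀ n, ρ n ∈ Set.Ioo 0 δ)
    (hρsum : Tendsto (fun N => ∑ n ∈ Finset.range N, ρ n * (δ - ρ n)) atTop atTop)
    (R : H → H)
    (hRres : ∀ x, ∃ w ∈ B₁ (R x), x - R x = γ • w)
    (hRuniq : ∀ x p, (∃ w ∈ B₁ p, x - p = γ • w) → p = R x)
    (s : ℕ → H)
    (hs : ∀ n, s (n + 1) = ρ n • R (s n - γ • B₂ (s n)) + (1 - ρ n) • s n) :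
    ∃ sh : H, WeakLim s sh ∧ ∃ u ∈ B₁ sh, u + B₂ sh = 0 := by
  obtain ⟨hγ0, -⟩ := hγ
  have hδ0 : 0 < δ := (hρ 0).1.trans (hρ 0).2
  set S : H → H := fun x => x + δ • (R (x - γ • B₂ x) - x)
  have hfix : ∀ z, IsFixedPt S z ↔ ∃ u ∈ B₁ z, u + B₂ z = 0 := fun z =>
    (isFixedPt_add_smul_sub_iff hδ0.ne').trans (forwardBackward_eq_self_iff hγ0.ne' hRres hRuniq)
  have hS : LipschitzWith 1 S := lipschitzWith_one_relaxed_forwardBackward hB₁.1 hκ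
    (mul_norm_sub_sq_le_inner_of_firmlyNonexpansive_smul hκ hB₂) hγ0.le hδ hδ0.le hRres
  have hrec : ∀ n, s (n + 1) = s n + (ρ n / δ) • (S (s n) - s n) := fun n => by
    rw [hs n, add_sub_cancel_left, smul_smul, div_mul_cancel₀ _ hδ0.ne']
    module
  have hsum : Tendsto (fun N => ∑ n ∈ Finset.range N, ρ n / δ * (1 - ρ n / δ)) atTop atTop := by
    have hterm : ∀ n, ρ n / δ * (1 - ρ n / δ) = ρ n * (δ - ρ n) / δ ^ 2 := fun n => by
      field_simp
    simpa only [hterm, ← Finset.sum_div] using hρsum.atTop_div_const (by positivity)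
  obtain ⟨z, hz⟩ := hzer
  obtain ⟨p, hp, hweak⟩ := exists_weakTendsto_krasnoselskiiMann hS ⟨z, (hfix z).mpr hz⟩
    (fun n => ⟨div_nonneg (hρ n).1.le hδ0.le, (div_le_one hδ0).mpr (hρ n).2.le⟩) hsum hrec
  exact ⟨p, hweak, (hfix p).mp hp⟩

end
end

section
/- Let X and Y be real Hilbert spaces, L : X → Y a bounded linear operator, and γ₁, γ₂ > 0 satisfying 1/γ₁ − γ₂‖L‖²_op > 0. Then there exists a constant c > 0 such that for all x ∈ X and y ∈ Y, (1/γ₁)‖x‖² − 2⟨Lx, y⟩ + (1/γ₂)‖y‖² ≥ c(‖x‖² + ‖y‖²). Consequently, the self-adjoint bounded linear operator P on X × Y defined by P(x, y) = (x/γ₁ − L*y, −Lx + y/γ₂) is strictly positive, i.e., ⟨(x, y), P(x, y)⟩ ≥ c(‖x‖² + ‖y‖²) for all (x, y). -/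
open RealInnerProductSpace

noncomputable section

lemma aux_amgm (a b K s t : ℝ) (ha : 0 ≤ a) (hb : 0 ≤ b) (hK : 0 ≤ K)
    (hs : 0 ≤ s) (ht : 0 ≤ t) (hab : K ^ 2 ≤ a * b) :
    2 * K * s * t ≤ a * s ^ 2 + b * t ^ 2 := by
  have h1 : K ≤ Real.sqrt (a * b) := by
    rw [show K = Real.sqrt (K ^ 2) by rw [Real.sqrt_sq hK]]
    exact Real.sqrt_le_sqrt hab
  have h2 : Real.sqrt (a * b) = Real.sqrt a * Real.sqrt b := Real.sqrt_mul ha b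
  have h3 := sq_nonneg (Real.sqrt a * s - Real.sqrt b * t)
  have h4 : Real.sqrt a ^ 2 = a := Real.sq_sqrt ha
  have h5 : Real.sqrt b ^ 2 = b := Real.sq_sqrt hb
  nlinarith [mul_nonneg hs ht, mul_nonneg (mul_nonneg hs ht) (sub_nonneg.2 h1)]

/-- strict positivity of the preconditioning operator `P` in the
primal-dual splitting analysis. -/
theorem preconditioner_strictly_positive
    {X Y : Type*} [NormedAddCommGroup X] [InnerProductSpace ℝ X] [CompleteSpace X]
    [NormedAddCommGroup Y] [InnerProductSpace ℝ Y] [CompleteSpace Y]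
    (L : X →L[ℝ] Y)
    (γ₁ γ₂ : ℝ) (hγ₁ : 0 < γ₁) (hγ₂ : 0 < γ₂)
    (hcond : 1 / γ₁ - γ₂ * ‖L‖ ^ 2 > 0) :
    ∃ c : ℝ, 0 < c ∧
      (∀ (x : X) (y : Y),
        c * (‖x‖ ^ 2 + ‖y‖ ^ 2) ≤
          (1 / γ₁) * ‖x‖ ^ 2 - 2 * ⟪L x, y⟫ + (1 / γ₂) * ‖y‖ ^ 2) ∧
      (∀ (x : X) (y : Y),
        c * (‖x‖ ^ 2 + ‖y‖ ^ 2) ≤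
          ⟪x, (1 / γ₁) • x - (ContinuousLinearMap.adjoint L) y⟫ +
            ⟪y, -(L x) + (1 / γ₂) • y⟫) := by
  set a : ℝ := 1 / γ₁ with ha_def
  set b : ℝ := 1 / γ₂ with hb_def
  set K : ℝ := ‖L‖ with hK_def
  have ha : 0 < a := by positivity
  have hb : 0 < b := by positivity
  have hK : 0 ≤ K := norm_nonneg _
  have habK : K ^ 2 < a * b := by
    have h : (1 / γ₁ - γ₂ * K ^ 2) * b > 0 := mul_pos hcond hb
    have hbγ : γ₂ * b = 1 := mul_one_div_cancel hγ₂.ne'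
    nlinarith
  set c : ℝ := (a * b - K ^ 2) / (a + b) with hc_def
  have hab : 0 < a + b := by positivity
  have hc : 0 < c := div_pos (by linarith) hab
  have hac : c ≤ a := by
    rw [hc_def, div_le_iff₀ hab]; nlinarith [sq_nonneg K]
  have hbc : c ≤ b := by
    rw [hc_def, div_le_iff₀ hab]; nlinarith [sq_nonneg K]
  have hprod : K ^ 2 ≤ (a - c) * (b - c) := by
    have : (a - c) * (b - c) - K ^ 2 = ((a * b - K ^ 2) / (a + b)) ^ 2 := by
      rw [hc_def]; field_simp; ring
    nlinarith [sq_nonneg ((a * b - K ^ 2) / (a + b))]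
  have key : ∀ (x : X) (y : Y),
      c * (‖x‖ ^ 2 + ‖y‖ ^ 2) ≤ a * ‖x‖ ^ 2 - 2 * ⟪L x, y⟫ + b * ‖y‖ ^ 2 := by
    intro x y
    have hip : ⟪L x, y⟫ ≤ K * ‖x‖ * ‖y‖ := by
      calc ⟪L x, y⟫ ≤ ‖L x‖ * ‖y‖ := real_inner_le_norm _ _
        _ ≤ (K * ‖x‖) * ‖y‖ := by
            apply mul_le_mul_of_nonneg_right (L.le_opNorm x) (norm_nonneg y)
        _ = K * ‖x‖ * ‖y‖ := by ring
    have := aux_amgm (a - c) (b - c) K ‖x‖ ‖y‖ (by linarith) (by linarith) hK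
      (norm_nonneg x) (norm_nonneg y) hprod
    nlinarith
  refine ⟨c, hc, key, fun x y => ?_⟩
  have heq : ⟪x, (1 / γ₁) • x - (ContinuousLinearMap.adjoint L) y⟫ +
      ⟪y, -(L x) + (1 / γ₂) • y⟫ =
      a * ‖x‖ ^ 2 - 2 * ⟪L x, y⟫ + b * ‖y‖ ^ 2 := by
    rw [inner_sub_right, inner_add_right, inner_smul_right, inner_smul_right,
      real_inner_self_eq_norm_sq, real_inner_self_eq_norm_sq,
      ContinuousLinearMap.adjoint_inner_right, inner_neg_right,
      real_inner_comm y (L x)]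
    ring
  rw [heq]; exact key x y

end
end
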